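/- Let N ≥ 3. An entangled N-qubit pure state |ψ⟩ is fragile with respect to the loss of any single qubit (i.e., ρ_{¬k}(ψ) is separable for every k = 1,…,N) if and only if there exist nonzero complex numbers a, b with |a|² + |b|² = 1 and pairs of orthonormal single-qubit vectors (|e_i⟩, |e_i^⊥⟩), i = 1,…,N, such that, up to a global phase, |ψ⟩ = a |e_1,…,e_N⟩ + b |e_1^⊥,…,e_N^⊥⟩; moreover, in this representation a and b can always be chosen real and positive. -/

import Mathlib

open scoped BigOperators ComplexConjugate

noncomputable section

/-- A single-qubit unit vector in `ℂ²`. -/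
def IsUnitQubit (e : Fin 2 → ℂ) : Prop := ∑ j, Complex.normSq (e j) = 1

/-- Norm-one condition for a multiqubit vector on the register `ι`. -/
def IsUnitState {ι : Type*} [Fintype ι] [DecidableEq ι] (ψ : (ι → Fin 2) → ℂ) : Prop :=
  ∑ x, Complex.normSq (ψ x) = 1

/-- The product state `⊗ᵢ eᵢ`. -/
def prodState {ι : Type*} [Fintype ι] (e : ι → Fin 2 → ℂ) : (ι → Fin 2) → ℂ :=
  fun x => ∏ i, e i (x i)

/-- A pure state is a product state if it is a tensor product of single-qubit unit vectors. -/
def IsProductState {ι : Type*} [Fintype ι] (ψ : (ι → Fin 2) → ℂ) : Prop :=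
  ∃ e : ι → Fin 2 → ℂ, (∀ i, IsUnitQubit (e i)) ∧ ψ = prodState e

/-- A pure state is entangled if it is not a product state. -/
def IsEntangledState {ι : Type*} [Fintype ι] (ψ : (ι → Fin 2) → ℂ) : Prop :=
  ¬ IsProductState ψ

/-- The projector `|v⟩⟨v|` as a matrix. -/
def proj {α : Type*} (v : α → ℂ) : Matrix α α ℂ :=
  Matrix.of fun x y => v x * conj (v y)

/-- A density matrix on the qubit register `ι` is separable if it is a finite convex
combination of projectors onto product states (and entangled otherwise). -/
def IsSeparableDensity {ι : Type*} [Fintype ι] (ρ : Matrix (ι → Fin 2) (ι → Fin 2) ℂ) : Prop :=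
  ∃ (n : ℕ) (w : Fin n → ℝ) (e : Fin n → ι → Fin 2 → ℂ),
    (∀ m, 0 ≤ w m) ∧ (∑ m, w m = 1) ∧ (∀ m i, IsUnitQubit (e m i)) ∧
    ρ = ∑ m, (w m : ℂ) • proj (prodState (e m))

/-- Assemble a full assignment of the `N` qubits from an assignment `x` of the qubits outside
`S` and an assignment `z` of the qubits in `S`. -/
def mergeCompl {N : ℕ} (S : Finset (Fin N)) (x : {i : Fin N // i ∉ S} → Fin 2)
    (z : {i : Fin N // i ∈ S} → Fin 2) : Fin N → Fin 2 :=
  fun i => if h : i ∈ S then z ⟨i, h⟩ else x ⟨i, h⟩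

/-- The reduced density operator `ρ_{¬S}(ψ)`: the partial trace of `|ψ⟩⟨ψ|` over the qubits
in `S`. -/
def reducedState {N : ℕ} (ψ : (Fin N → Fin 2) → ℂ) (S : Finset (Fin N)) :
    Matrix ({i : Fin N // i ∉ S} → Fin 2) ({i : Fin N // i ∉ S} → Fin 2) ℂ :=
  Matrix.of fun x y => ∑ z : {i : Fin N // i ∈ S} → Fin 2,
    ψ (mergeCompl S x z) * conj (ψ (mergeCompl S y z))

/-!
Write `ψ = ∑ⱼ |j⟩_k ⊗ ψⱼ` at a qubit `k`. The range of `ρ_{¬k}` is spanned by the slices `ψ₀, ψ₁`,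
and also by the product vectors of any separable decomposition of it. If the slices were
dependent, `ψ` would be a product state; so they span a plane, which is then spanned by two product
vectors, and `ψ = E + F` with unnormalised product states `E = ⊗ Eᵢ`, `F = ⊗ Fᵢ`, where `Eᵢ, Fᵢ`
are independent at every qubit. Off a qubit `κ` the factors of `E` and `F` still differ at
`N - 1 ≥ 2` qubits, so every product vector in their span is a multiple of one of them, and a
separable `ρ_{¬κ}` has no cross term `|E'⟩⟨F'|`; its coefficient is `⟨F_κ, E_κ⟩`. Normalising the
factors gives `a, b > 0`. Conversely, orthogonality at `k` removes the cross terms and leaves the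
mixture `|a|² |E'⟩⟨E'| + |b|² |F'⟩⟨F'|`.
-/

section PairLinearAlgebra

variable {K M : Type*} [Field K] [AddCommGroup M] [Module K M]

theorem linearIndependent_pair_iff_det_ne_zero {u v : Fin 2 → K} :
    LinearIndependent K ![u, v] ↔ u 0 * v 1 - u 1 * v 0 ≠ 0 := by
  rw [← Matrix.det_fin_two_of, ← isUnit_iff_ne_zero, ← Matrix.isUnit_iff_isUnit_det,
    ← Matrix.linearIndependent_rows_iff_isUnit]
  convert Iff.rfl
  ext i j
  fin_cases i <;> fin_cases j <;> rfl

/-- A tensor `∑ⱼ |j⟩ ⊗ (uⱼ P + vⱼ Q)` of Schmidt rank two is not an elementary tensor `a ⊗ R`. -/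
theorem not_forall_smul_eq_smul_add_smul {u v a : Fin 2 → K} {P Q R : M}
    (huv : LinearIndependent K ![u, v]) (hPQ : LinearIndependent K ![P, Q]) :
    ¬ ∀ j, a j • R = u j • P + v j • Q := by
  intro h
  have hdet := linearIndependent_pair_iff_det_ne_zero.mp huv
  obtain ⟨hu, hv⟩ := LinearIndependent.pair_iff.mp hPQ (a 1 * u 0 - a 0 * u 1)
    (a 1 * v 0 - a 0 * v 1) (by linear_combination (norm := module) a 0 • h 1 - a 1 • h 0)
  have ha0 : a 0 * (u 0 * v 1 - u 1 * v 0) = 0 := by linear_combination v 0 * hu - u 0 * hv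
  have ha1 : a 1 * (u 0 * v 1 - u 1 * v 0) = 0 := by linear_combination v 1 * hu - u 1 * hv
  have ha : a = 0 := by
    ext j
    fin_cases j
    exacts [(mul_eq_zero.mp ha0).resolve_right hdet, (mul_eq_zero.mp ha1).resolve_right hdet]
  have hcoeff (j : Fin 2) : u j = 0 ∧ v j = 0 :=
    LinearIndependent.pair_iff.mp hPQ _ _ (by rw [← h j, ha, Pi.zero_apply, zero_smul])
  exact hdet (by rw [(hcoeff 0).1, (hcoeff 1).1]; ring)

theorem linearIndependent_of_eq_smul_add_smul {g : Fin 2 → M} {u v : Fin 2 → K} {P Q : M}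
    (h : ∀ j, g j = u j • P + v j • Q) (hg : LinearIndependent K g) :
    LinearIndependent K ![u, v] := by
  by_contra huv
  rw [linearIndependent_pair_iff_det_ne_zero, not_not, ← Matrix.det_fin_two_of,
    ← Matrix.exists_mulVec_eq_zero_iff] at huv
  obtain ⟨c, hc, hcuv⟩ := huv
  have hu : c 0 * u 0 + c 1 * u 1 = 0 := by
    simpa [Matrix.mulVec, dotProduct, Fin.sum_univ_two, mul_comm] using congrFun hcuv 0
  have hv : c 0 * v 0 + c 1 * v 1 = 0 := by
    simpa [Matrix.mulVec, dotProduct, Fin.sum_univ_two, mul_comm] using congrFun hcuv 1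
  refine hc (funext (Fintype.linearIndependent_iff.mp hg c ?_))
  rw [Fin.sum_univ_two, h, h]
  linear_combination (norm := module) hu • P + hv • Q

end PairLinearAlgebra

section Projectors

open scoped Matrix

variable {α : Type*} [Fintype α]

omit [Fintype α] in
theorem proj_smul (c : ℂ) (v : α → ℂ) : proj (c • v) = (c * conj c) • proj v := by
  ext x y
  simp only [proj, Matrix.of_apply, Matrix.smul_apply, Pi.smul_apply, smul_eq_mul, map_mul]
  ring

theorem dotProduct_proj_mulVec_star (z v : α → ℂ) :
    z ⬝ᵥ (proj v *ᵥ star z) = (z ⬝ᵥ v) * conj (z ⬝ᵥ v) := by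
  simp only [dotProduct, Matrix.mulVec, proj, Matrix.of_apply, Pi.star_apply, map_sum, map_mul,
    Finset.mul_sum, Finset.sum_mul, RCLike.star_def]
  rw [Finset.sum_comm]
  exact Finset.sum_congr rfl fun _ _ => Finset.sum_congr rfl fun _ _ => by ring

/-- A functional `φ` vanishing on the `U l` annihilates the quadratic form of the matrix, which
dominates each `wₘ |φ Vₘ|²`. -/
theorem mem_span_of_sum_smul_proj_eq {ι ι' : Type*} [Fintype ι] [Fintype ι'] {w : ι → ℝ}
    {V : ι → α → ℂ} {w' : ι' → ℝ} {U : ι' → α → ℂ} (hw : ∀ m, 0 ≤ w m)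
    (h : ∑ m, (w m : ℂ) • proj (V m) = ∑ l, (w' l : ℂ) • proj (U l)) {m : ι} (hm : w m ≠ 0) :
    V m ∈ Submodule.span ℂ (U '' {l | w' l ≠ 0}) := by
  classical
  rw [← Subspace.forall_mem_dualAnnihilator_apply_eq_zero_iff]
  intro φ hφ
  rw [Submodule.mem_dualAnnihilator] at hφ
  set z : α → ℂ := fun x => φ fun y => if x = y then 1 else 0
  have hφz (v : α → ℂ) : φ v = z ⬝ᵥ v := by
    rw [LinearMap.pi_apply_eq_sum_univ φ v, dotProduct]
    exact Finset.sum_congr rfl fun x _ => by rw [smul_eq_mul, mul_comm]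
  have hU (l : ι') : w' l * Complex.normSq (z ⬝ᵥ U l) = 0 := by
    by_cases hl : w' l = 0
    · rw [hl, zero_mul]
    · rw [← hφz, hφ _ (Submodule.subset_span ⟨l, hl, rfl⟩), map_zero, mul_zero]
  have key := congrArg (fun A => z ⬝ᵥ (A *ᵥ star z)) h
  simp only [Matrix.sum_mulVec, Matrix.smul_mulVec, dotProduct_sum, dotProduct_smul,
    dotProduct_proj_mulVec_star, smul_eq_mul, Complex.mul_conj] at key
  have hsum : ∑ m, w m * Complex.normSq (z ⬝ᵥ V m) = 0 := by
    rw [← Finset.sum_eq_zero fun l _ => hU l]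
    exact_mod_cast key
  have hterm := (Finset.sum_eq_zero_iff_of_nonneg fun m _ =>
    mul_nonneg (hw m) (Complex.normSq_nonneg _)).mp hsum m (Finset.mem_univ m)
  rw [hφz, ← Complex.normSq_eq_zero]
  exact (mul_eq_zero.mp hterm).resolve_left hm

theorem span_range_eq_span_image_of_sum_proj_eq {κ ι : Type*} [Fintype κ] [Fintype ι]
    {g : κ → α → ℂ} {w : ι → ℝ} {V : ι → α → ℂ} (hw : ∀ m, 0 ≤ w m)
    (h : ∑ j, proj (g j) = ∑ m, (w m : ℂ) • proj (V m)) :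
    Submodule.span ℂ (Set.range g) = Submodule.span ℂ (V '' {m | w m ≠ 0}) := by
  have h' : ∑ j, ((1 : ℝ) : ℂ) • proj (g j) = ∑ m, (w m : ℂ) • proj (V m) := by simpa using h
  apply le_antisymm <;> rw [Submodule.span_le]
  · rintro _ ⟨j, rfl⟩
    exact mem_span_of_sum_smul_proj_eq (fun _ => zero_le_one) h' one_ne_zero
  · rintro _ ⟨m, hm, rfl⟩
    simpa using mem_span_of_sum_smul_proj_eq hw h'.symm hm

omit [Fintype α] in
theorem LinearIndependent.coeff_eq_zero_of_sum_dyads_eq_zero {u v : α → ℂ}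
    (huv : LinearIndependent ℂ ![u, v]) {A B C D : ℂ}
    (h : ∀ x y, A * (u x * conj (u y)) + B * (u x * conj (v y)) + C * (v x * conj (u y))
      + D * (v x * conj (v y)) = 0) :
    A = 0 ∧ B = 0 ∧ C = 0 ∧ D = 0 := by
  have hrow (y : α) : A * conj (u y) + B * conj (v y) = 0 ∧ C * conj (u y) + D * conj (v y) = 0 :=
    LinearIndependent.pair_iff.mp huv _ _ (funext fun x => by
      simp only [Pi.add_apply, Pi.smul_apply, smul_eq_mul, Pi.zero_apply]
      linear_combination h x y)
  have hcoeff (s t : ℂ) (hst : ∀ y, s * conj (u y) + t * conj (v y) = 0) : s = 0 ∧ t = 0 := by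
    simpa using LinearIndependent.pair_iff.mp huv (conj s) (conj t)
      (funext fun y => by simpa using congrArg conj (hst y))
  obtain ⟨hA, hB⟩ := hcoeff A B fun y => (hrow y).1
  obtain ⟨hC, hD⟩ := hcoeff C D fun y => (hrow y).2
  exact ⟨hA, hB, hC, hD⟩

end Projectors

section ProductStates

variable {ι : Type*} [Fintype ι]

theorem IsUnitQubit.ne_zero {v : Fin 2 → ℂ} (hv : IsUnitQubit v) : v ≠ 0 := by
  rintro rfl
  simp [IsUnitQubit] at hv

theorem prodState_ne_zero {p : ι → Fin 2 → ℂ} (hp : ∀ i, p i ≠ 0) : prodState p ≠ 0 := by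
  choose x hx using fun i => Function.ne_iff.mp (hp i)
  exact Function.ne_iff.mpr ⟨x, Finset.prod_ne_zero_iff.mpr fun i _ => hx i⟩

theorem prodState_eq_zero {p : ι → Fin 2 → ℂ} {i : ι} (hi : p i = 0) : prodState p = 0 :=
  funext fun _ => Finset.prod_eq_zero (Finset.mem_univ i) (by rw [hi, Pi.zero_apply])

theorem prodState_smul (c : ι → ℂ) (p : ι → Fin 2 → ℂ) :
    prodState (fun i => c i • p i) = (∏ i, c i) • prodState p := by
  funext x
  simp [prodState, Finset.prod_mul_distrib]

variable [DecidableEq ι]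

omit [Fintype ι] in
theorem update_apply_ne_zero {β : Type*} [Zero β] {f : ι → β} (hf : ∀ l, f l ≠ 0) {b : β}
    (hb : b ≠ 0) (i l : ι) : Function.update f i b l ≠ 0 := by
  rw [Function.update_apply]
  split_ifs
  exacts [hb, hf l]

theorem sum_prodState_mul_conj (p q : ι → Fin 2 → ℂ) :
    ∑ x, prodState p x * conj (prodState q x) = ∏ i, ∑ j, p i j * conj (q i j) := by
  rw [Fintype.prod_sum]
  simp only [prodState, map_prod, Finset.prod_mul_distrib]

theorem prodState_update (p : ι → Fin 2 → ℂ) (x : ι → Fin 2) (i : ι) (j : Fin 2) :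
    prodState p (Function.update x i j) = p i j * prodState (Function.update p i 1) x := by
  simp only [prodState]
  rw [← Finset.mul_prod_erase _ _ (Finset.mem_univ i),
    ← Finset.mul_prod_erase _ _ (Finset.mem_univ i)]
  simp only [Function.update_self, Pi.one_apply, one_mul]
  congr 1
  exact Finset.prod_congr rfl fun l hl => by
    simp only [Function.update_of_ne (Finset.ne_of_mem_erase hl)]

theorem linearIndependent_prodState_pair {p q : ι → Fin 2 → ℂ} (hp : ∀ l, p l ≠ 0)
    (hq : ∀ l, q l ≠ 0) {i : ι} (hi : LinearIndependent ℂ ![p i, q i]) :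
    LinearIndependent ℂ ![prodState p, prodState q] := by
  rw [LinearIndependent.pair_iff] at hi ⊢
  intro s t hst
  have hrest (x : ι → Fin 2) :
      s * prodState (Function.update p i 1) x = 0 ∧ t * prodState (Function.update q i 1) x = 0 :=
    hi _ _ (funext fun j => by
      have := congrFun hst (Function.update x i j)
      simp only [Pi.add_apply, Pi.smul_apply, smul_eq_mul, prodState_update,
        Pi.zero_apply] at this ⊢
      linear_combination this)
  obtain ⟨x, hx⟩ := Function.ne_iff.mp
    (prodState_ne_zero (update_apply_ne_zero hp one_ne_zero i))
  obtain ⟨y, hy⟩ := Function.ne_iff.mp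
    (prodState_ne_zero (update_apply_ne_zero hq one_ne_zero i))
  exact ⟨(mul_eq_zero.mp (hrest x).1).resolve_right hx,
    (mul_eq_zero.mp (hrest y).2).resolve_right hy⟩

theorem eq_zero_or_eq_zero_of_prodState_eq [Nontrivial ι] {p q r : ι → Fin 2 → ℂ}
    (hpq : ∀ i, LinearIndependent ℂ ![p i, q i]) {A B : ℂ}
    (h : prodState r = A • prodState p + B • prodState q) : A = 0 ∨ B = 0 := by
  by_contra! hAB
  obtain ⟨i, i', hii'⟩ := exists_pair_ne ι
  have hp (l : ι) : p l ≠ 0 := by simpa using (hpq l).ne_zero 0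
  have hq (l : ι) : q l ≠ 0 := by simpa using (hpq l).ne_zero 1
  -- split off site `i`; the remaining factors still differ at site `i'`
  have hrest : LinearIndependent ℂ
      ![prodState (Function.update p i 1), prodState (Function.update q i 1)] :=
    linearIndependent_prodState_pair (update_apply_ne_zero hp one_ne_zero i)
      (update_apply_ne_zero hq one_ne_zero i) (i := i')
      (by simpa [Function.update_of_ne hii'.symm] using hpq i')
  have hsite : LinearIndependent ℂ ![A • p i, B • q i] := by
    refine LinearIndependent.pair_iff.mpr fun s t hst => ?_
    have := LinearIndependent.pair_iff.mp (hpq i) (s * A) (t * B) (by rw [mul_smul, mul_smul, hst])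
    exact ⟨(mul_eq_zero.mp this.1).resolve_right hAB.1, (mul_eq_zero.mp this.2).resolve_right hAB.2⟩
  refine not_forall_smul_eq_smul_add_smul hsite hrest (a := r i)
    (R := prodState (Function.update r i 1)) fun j => funext fun x => ?_
  have := congrFun h (Function.update x i j)
  simp only [prodState_update, Pi.add_apply, Pi.smul_apply, smul_eq_mul] at this ⊢
  linear_combination this

end ProductStates

section SeparableMixtures

variable {ι : Type*} [Fintype ι] [DecidableEq ι]

theorem exists_span_eq_span_prodStates {κ : Type*} [Fintype κ] {g : κ → (ι → Fin 2) → ℂ}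
    (hsep : IsSeparableDensity (∑ j, proj (g j))) :
    ∃ S : Set ((ι → Fin 2) → ℂ), S.Nonempty ∧ (∀ V ∈ S, V ≠ 0 ∧ ∃ p, V = prodState p) ∧
      Submodule.span ℂ (Set.range g) = Submodule.span ℂ S := by
  obtain ⟨n, w, e, hw, hsum, he, hρ⟩ := hsep
  obtain ⟨m, -, hm⟩ := Finset.exists_ne_zero_of_sum_ne_zero (hsum.trans_ne one_ne_zero)
  refine ⟨(fun m => prodState (e m)) '' {m | w m ≠ 0}, ⟨_, m, hm, rfl⟩, ?_,
    span_range_eq_span_image_of_sum_proj_eq hw hρ⟩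
  rintro _ ⟨m, -, rfl⟩
  exact ⟨prodState_ne_zero fun i => (he m i).ne_zero, _, rfl⟩

theorem exists_eq_smul_prodState_of_not_linearIndependent {g : Fin 2 → (ι → Fin 2) → ℂ}
    (hsep : IsSeparableDensity (∑ j, proj (g j))) (hg : ¬ LinearIndependent ℂ g) :
    ∃ (χ : Fin 2 → ℂ) (p : ι → Fin 2 → ℂ), ∀ j, g j = χ j • prodState p := by
  obtain ⟨S, ⟨V, hV⟩, hS, hspan⟩ := exists_span_eq_span_prodStates hsep
  obtain ⟨hV0, p, rfl⟩ := hS V hV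
  have hdim : Module.finrank ℂ (Submodule.span ℂ (Set.range g)) ≤ 1 := by
    rw [linearIndependent_iff_card_eq_finrank_span, Fintype.card_fin] at hg
    have := finrank_range_le_card (R := ℂ) g
    rw [Fintype.card_fin] at this
    exact Nat.le_of_lt_succ (lt_of_le_of_ne this (Ne.symm hg))
  have hline : ℂ ∙ prodState p = Submodule.span ℂ (Set.range g) :=
    Submodule.eq_of_le_of_finrank_le
      (by rw [hspan, Submodule.span_singleton_le_iff_mem]; exact Submodule.subset_span hV)
      (by rwa [finrank_span_singleton hV0])
  choose χ hχ using fun j => Submodule.mem_span_singleton.mp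
    (hline ▸ Submodule.subset_span (Set.mem_range_self j))
  exact ⟨χ, p, fun j => (hχ j).symm⟩

theorem exists_eq_smul_prodState_add_smul_prodState {g : Fin 2 → (ι → Fin 2) → ℂ}
    (hsep : IsSeparableDensity (∑ j, proj (g j))) (hg : LinearIndependent ℂ g) :
    ∃ (a b : Fin 2 → ℂ) (p q : ι → Fin 2 → ℂ),
      ∀ j, g j = a j • prodState p + b j • prodState q := by
  obtain ⟨S, ⟨V, hV⟩, hS, hspan⟩ := exists_span_eq_span_prodStates hsep
  have hdim : Module.finrank ℂ (Submodule.span ℂ (Set.range g)) = 2 := by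
    rw [finrank_span_eq_card hg, Fintype.card_fin]
  obtain ⟨W, hW, hVW⟩ : ∃ W ∈ S, W ∉ ℂ ∙ V := by
    by_contra! hall
    have := Submodule.finrank_mono (hspan ▸ (Submodule.span_le.mpr hall))
    rw [hdim, finrank_span_singleton (hS V hV).1] at this
    omega
  have hVW' : LinearIndependent ℂ ![V, W] :=
    (LinearIndependent.pair_iff' (hS V hV).1).mpr fun c hc =>
      hVW (Submodule.mem_span_singleton.mpr ⟨c, hc⟩)
  have hplane : Submodule.span ℂ {V, W} = Submodule.span ℂ (Set.range g) := by
    refine Submodule.eq_of_le_of_finrank_le ?_ ?_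
    · rw [hspan, Submodule.span_le, Set.insert_subset_iff, Set.singleton_subset_iff]
      exact ⟨Submodule.subset_span hV, Submodule.subset_span hW⟩
    · rw [hdim, ← Matrix.range_cons_cons_empty V W ![], finrank_span_eq_card hVW',
        Fintype.card_fin]
  choose a b hab using fun j => Submodule.mem_span_pair.mp
    (hplane ▸ Submodule.subset_span (Set.mem_range_self j))
  obtain ⟨p, rfl⟩ := (hS V hV).2
  obtain ⟨q, rfl⟩ := (hS W hW).2
  exact ⟨a, b, p, q, fun j => (hab j).symm⟩

theorem sum_mul_conj_eq_zero_of_isSeparableDensity [Nontrivial ι] {p q : ι → Fin 2 → ℂ}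
    (hpq : ∀ i, LinearIndependent ℂ ![p i, q i]) {a b : Fin 2 → ℂ}
    (hsep : IsSeparableDensity (∑ j, proj (a j • prodState p + b j • prodState q))) :
    ∑ j, a j * conj (b j) = 0 := by
  obtain ⟨n, w, e, hw, -, -, hρ⟩ := hsep
  set P := prodState p
  set Q := prodState q
  have hPQ : LinearIndependent ℂ ![P, Q] :=
    linearIndependent_prodState_pair (fun i => by simpa using (hpq i).ne_zero 0)
      (fun i => by simpa using (hpq i).ne_zero 1) (hpq (Classical.arbitrary ι))
  have hspan := span_range_eq_span_image_of_sum_proj_eq hw hρ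
  have hmem (m : Fin n) (hm : w m ≠ 0) : prodState (e m) ∈ Submodule.span ℂ {P, Q} := by
    have hm' : prodState (e m) ∈ Submodule.span ℂ (Set.range fun j => a j • P + b j • Q) := by
      rw [hspan]
      exact Submodule.subset_span ⟨m, hm, rfl⟩
    refine Submodule.span_le.mpr ?_ hm'
    rintro _ ⟨j, rfl⟩
    exact Submodule.mem_span_pair.mpr ⟨a j, b j, rfl⟩
  -- no cross terms: each product vector of the mixture is a multiple of `P` or of `Q`
  have hterm (m : Fin n) :
      ∃ s t : ℂ, (w m : ℂ) • proj (prodState (e m)) = s • proj P + t • proj Q := by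
    by_cases hm : w m = 0
    · exact ⟨0, 0, by simp [hm]⟩
    obtain ⟨A, B, hAB⟩ := Submodule.mem_span_pair.mp (hmem m hm)
    rcases eq_zero_or_eq_zero_of_prodState_eq hpq hAB.symm with rfl | rfl
    · exact ⟨0, w m * (B * conj B), by simp [← hAB, proj_smul, smul_smul]⟩
    · exact ⟨w m * (A * conj A), 0, by simp [← hAB, proj_smul, smul_smul]⟩
  choose s t hst using hterm
  rw [Finset.sum_congr rfl fun m _ => hst m, Finset.sum_add_distrib, ← Finset.sum_smul,
    ← Finset.sum_smul] at hρ
  refine (hPQ.coeff_eq_zero_of_sum_dyads_eq_zero (A := ∑ j, a j * conj (a j) - ∑ m, s m)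
    (B := ∑ j, a j * conj (b j)) (C := ∑ j, b j * conj (a j))
    (D := ∑ j, b j * conj (b j) - ∑ m, t m) fun x y => ?_).2.1
  have hxy := congrFun (congrFun hρ x) y
  simp only [Matrix.sum_apply, Matrix.add_apply, Matrix.smul_apply, proj, Matrix.of_apply,
    Pi.add_apply, Pi.smul_apply, smul_eq_mul, map_add, map_mul, Fin.sum_univ_two] at hxy ⊢
  linear_combination hxy

omit [DecidableEq ι] in
theorem isSeparableDensity_of_sum_mul_conj_eq_zero {p q : ι → Fin 2 → ℂ}
    (hp : ∀ i, IsUnitQubit (p i)) (hq : ∀ i, IsUnitQubit (q i)) {α β : Fin 2 → ℂ}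
    (hnorm : ∑ j, Complex.normSq (α j) + ∑ j, Complex.normSq (β j) = 1)
    (hαβ : ∑ j, α j * conj (β j) = 0) :
    IsSeparableDensity (∑ j, proj (α j • prodState p + β j • prodState q)) := by
  have hw (v : Fin 2 → ℂ) : 0 ≤ ∑ j, Complex.normSq (v j) :=
    Finset.sum_nonneg fun j _ => Complex.normSq_nonneg _
  refine ⟨2, ![∑ j, Complex.normSq (α j), ∑ j, Complex.normSq (β j)], ![p, q],
    Fin.forall_fin_two.mpr ⟨hw α, hw β⟩,
    by simpa [Fin.sum_univ_two] using hnorm, Fin.forall_fin_two.mpr ⟨hp, hq⟩, ?_⟩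
  have hβα : ∑ j, β j * conj (α j) = 0 := by simpa [mul_comm] using congrArg conj hαβ
  ext x y
  simp only [Matrix.sum_apply, Matrix.smul_apply, proj, Matrix.of_apply, Pi.add_apply,
    Pi.smul_apply, smul_eq_mul, map_add, map_mul, Fin.sum_univ_two, Matrix.cons_val_zero,
    Matrix.cons_val_one, Complex.ofReal_add, ← Complex.mul_conj] at hαβ hβα ⊢
  linear_combination (prodState p x * conj (prodState q y)) * hαβ
    + (prodState q x * conj (prodState p y)) * hβα

end SeparableMixtures

section Normalization

variable {ι : Type*} [Fintype ι] [DecidableEq ι]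

theorem IsUnitQubit.sum_mul_conj_self {v : Fin 2 → ℂ} (hv : IsUnitQubit v) :
    ∑ j, v j * conj (v j) = 1 := by
  simp only [Complex.mul_conj]
  exact_mod_cast hv

theorem exists_eq_smul_isUnitQubit {v : Fin 2 → ℂ} (hv : v ≠ 0) :
    ∃ (r : ℝ) (e : Fin 2 → ℂ), 0 < r ∧ IsUnitQubit e ∧ v = (r : ℂ) • e := by
  set s := ∑ j, Complex.normSq (v j)
  obtain ⟨j, hj⟩ := Function.ne_iff.mp hv
  have hs : 0 < s := Finset.sum_pos' (fun j _ => Complex.normSq_nonneg _)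
    ⟨j, Finset.mem_univ j, Complex.normSq_pos.mpr hj⟩
  have hr : (√s : ℂ) ≠ 0 := by exact_mod_cast (Real.sqrt_pos.mpr hs).ne'
  refine ⟨√s, (√s : ℂ)⁻¹ • v, Real.sqrt_pos.mpr hs, ?_,
    by rw [smul_smul, mul_inv_cancel₀ hr, one_smul]⟩
  simp only [IsUnitQubit, Pi.smul_apply, smul_eq_mul, Complex.normSq_mul, ← Finset.mul_sum,
    ← Complex.ofReal_inv, Complex.normSq_ofReal]
  rw [← mul_inv, Real.mul_self_sqrt hs.le]
  exact inv_mul_cancel₀ hs.ne'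

theorem sum_normSq_prodState (p : ι → Fin 2 → ℂ) :
    ∑ x, Complex.normSq (prodState p x) = ∏ i, ∑ j, Complex.normSq (p i j) := by
  apply Complex.ofReal_injective
  push_cast
  simp only [← Complex.mul_conj]
  exact sum_prodState_mul_conj p p

theorem isProductState_of_isUnitState {p : ι → Fin 2 → ℂ} (hp : IsUnitState (prodState p)) :
    IsProductState (prodState p) := by
  have hp0 (i : ι) : p i ≠ 0 := fun hi => by simp [IsUnitState, prodState_eq_zero hi] at hp
  choose r e hr he hpe using fun i => exists_eq_smul_isUnitQubit (hp0 i)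
  have hprod : prodState p = ((∏ i, r i : ℝ) : ℂ) • prodState e := by
    rw [show p = fun i => (r i : ℂ) • e i from funext hpe, prodState_smul]
    push_cast
    rfl
  have he' : ∑ x, Complex.normSq (prodState e x) = 1 := by
    rw [sum_normSq_prodState]
    exact Finset.prod_eq_one fun i _ => he i
  rw [IsUnitState, hprod] at hp
  simp only [Pi.smul_apply, smul_eq_mul, Complex.normSq_mul, Complex.normSq_ofReal,
    ← Finset.mul_sum, he', mul_one] at hp
  have hr1 : ∏ i, r i = 1 := by
    have : 0 < ∏ i, r i := Finset.prod_pos fun i _ => hr i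
    nlinarith
  exact ⟨e, he, by rw [hprod, hr1, Complex.ofReal_one, one_smul]⟩

theorem exists_ghz_form_of_eq_prodState_add_prodState [Nonempty ι] {E F : ι → Fin 2 → ℂ}
    (hE : ∀ i, E i ≠ 0) (hF : ∀ i, F i ≠ 0) (horth : ∀ i, ∑ j, E i j * conj (F i j) = 0)
    (hunit : IsUnitState (prodState E + prodState F)) :
    ∃ (a b : ℝ) (e f : ι → Fin 2 → ℂ), 0 < a ∧ 0 < b ∧ a ^ 2 + b ^ 2 = 1 ∧
      (∀ i, IsUnitQubit (e i)) ∧ (∀ i, IsUnitQubit (f i)) ∧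
      (∀ i, ∑ j, conj (e i j) * f i j = 0) ∧
      prodState E + prodState F = fun x => (a : ℂ) * prodState e x + (b : ℂ) * prodState f x := by
  choose r e hr he hEe using fun i => exists_eq_smul_isUnitQubit (hE i)
  choose s f hs hf hFf using fun i => exists_eq_smul_isUnitQubit (hF i)
  have horth' (i : ι) : ∑ j, e i j * conj (f i j) = 0 := by
    have hrs : ((r i * s i : ℝ) : ℂ) ≠ 0 := by exact_mod_cast (mul_pos (hr i) (hs i)).ne'
    refine (mul_eq_zero.mp ?_).resolve_left hrs
    rw [Finset.mul_sum, ← horth i]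
    refine Finset.sum_congr rfl fun j _ => ?_
    rw [hEe, hFf, Pi.smul_apply, Pi.smul_apply, smul_eq_mul, smul_eq_mul, map_mul,
      Complex.conj_ofReal]
    push_cast
    ring
  have hψ : prodState E + prodState F =
      fun x => ((∏ i, r i : ℝ) : ℂ) * prodState e x + ((∏ i, s i : ℝ) : ℂ) * prodState f x := by
    rw [show E = fun i => (r i : ℂ) • e i from funext hEe,
      show F = fun i => (s i : ℂ) • f i from funext hFf, prodState_smul, prodState_smul]
    push_cast
    rfl
  have hee : ∑ x, prodState e x * conj (prodState e x) = 1 := by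
    rw [sum_prodState_mul_conj]
    exact Finset.prod_eq_one fun i _ => (he i).sum_mul_conj_self
  have hff : ∑ x, prodState f x * conj (prodState f x) = 1 := by
    rw [sum_prodState_mul_conj]
    exact Finset.prod_eq_one fun i _ => (hf i).sum_mul_conj_self
  have hef : ∑ x, prodState e x * conj (prodState f x) = 0 := by
    rw [sum_prodState_mul_conj]
    exact Finset.prod_eq_zero (Finset.mem_univ (Classical.arbitrary ι)) (horth' _)
  have hfe : ∑ x, prodState f x * conj (prodState e x) = 0 := by
    simpa [mul_comm] using congrArg conj hef
  refine ⟨∏ i, r i, ∏ i, s i, e, f, Finset.prod_pos fun i _ => hr i,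
    Finset.prod_pos fun i _ => hs i, ?_, he, hf,
    fun i => by simpa [mul_comm] using congrArg conj (horth' i), hψ⟩
  rw [hψ, IsUnitState] at hunit
  set a : ℂ := ((∏ i, r i : ℝ) : ℂ)
  set b : ℂ := ((∏ i, s i : ℝ) : ℂ)
  have hexpand (x : ι → Fin 2) : (a * prodState e x + b * prodState f x) *
      conj (a * prodState e x + b * prodState f x) =
      a * a * (prodState e x * conj (prodState e x))
      + a * b * (prodState e x * conj (prodState f x))
      + b * a * (prodState f x * conj (prodState e x))
      + b * b * (prodState f x * conj (prodState f x)) := by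
    simp only [map_add, map_mul, a, b, Complex.conj_ofReal]
    ring
  apply Complex.ofReal_injective
  calc (((∏ i, r i) ^ 2 + (∏ i, s i) ^ 2 : ℝ) : ℂ)
      = ∑ x, (a * prodState e x + b * prodState f x) *
          conj (a * prodState e x + b * prodState f x) := by
        simp only [hexpand, Finset.sum_add_distrib, ← Finset.mul_sum, hee, hef, hfe, hff, a, b]
        push_cast
        ring
    _ = ((1 : ℝ) : ℂ) := by
        simp only [Complex.mul_conj]
        exact_mod_cast hunit

end Normalization

section Slices

variable {N : ℕ}

abbrev OtherQubits (k : Fin N) : Type := {i : Fin N // i ∉ ({k} : Finset (Fin N))}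

/-- The component `⟨j|_k ψ` of `ψ = ∑ⱼ |j⟩_k ⊗ ⟨j|_k ψ`. -/
def slice (ψ : (Fin N → Fin 2) → ℂ) (k : Fin N) (j : Fin 2) : (OtherQubits k → Fin 2) → ℂ :=
  fun x => ψ (mergeCompl {k} x fun _ => j)

def extendAt (k : Fin N) (v : Fin 2 → ℂ) (p : OtherQubits k → Fin 2 → ℂ) : Fin N → Fin 2 → ℂ :=
  fun i => if h : i ∈ ({k} : Finset (Fin N)) then v else p ⟨i, h⟩

theorem reducedState_singleton (ψ : (Fin N → Fin 2) → ℂ) (k : Fin N) :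
    reducedState ψ {k} = ∑ j, proj (slice ψ k j) := by
  ext x y
  simp only [reducedState, Matrix.of_apply, Matrix.sum_apply, proj, slice]
  refine Fintype.sum_equiv (Equiv.funUnique _ (Fin 2)) _ _ fun z => ?_
  have hz : z = fun _ => z default := funext fun i => congrArg z (Subsingleton.elim i default)
  conv_lhs => rw [hz]
  rfl

theorem slice_prodState (e : Fin N → Fin 2 → ℂ) (k : Fin N) (j : Fin 2) :
    slice (prodState e) k j = e k j • prodState fun i : OtherQubits k => e i := by
  funext x
  have hsub : ∀ i, i ∈ Finset.univ.erase k ↔ i ∉ ({k} : Finset (Fin N)) := by simp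
  rw [slice, prodState, ← Finset.mul_prod_erase _ _ (Finset.mem_univ k),
    Finset.prod_subtype _ hsub, Pi.smul_apply, smul_eq_mul, prodState]
  congr 1
  · simp [mergeCompl]
  · exact Finset.prod_congr rfl fun i _ => by rw [mergeCompl, dif_neg i.2]

theorem slice_prodState_extendAt (k : Fin N) (v : Fin 2 → ℂ) (p : OtherQubits k → Fin 2 → ℂ)
    (j : Fin 2) : slice (prodState (extendAt k v p)) k j = v j • prodState p := by
  rw [slice_prodState]
  congr
  · simp [extendAt]
  · funext i
    exact dif_neg i.2

theorem eq_of_forall_slice_eq {ψ φ : (Fin N → Fin 2) → ℂ} (k : Fin N)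
    (h : ∀ j, slice ψ k j = slice φ k j) : ψ = φ := by
  funext x
  have hx : mergeCompl {k} (fun i => x i) (fun _ => x k) = x := by
    funext i
    simp only [mergeCompl]
    split_ifs with hi
    · rw [Finset.mem_singleton.mp hi]
    · rfl
  rw [← hx]
  exact congrFun (h (x k)) _

theorem nontrivial_otherQubits (hN : 3 ≤ N) (k : Fin N) : Nontrivial (OtherQubits k) := by
  rw [← Fintype.one_lt_card_iff_nontrivial, Fintype.card_subtype_compl]
  simp only [Fintype.card_fin, Fintype.card_coe, Finset.card_singleton]
  omega

end Slices

theorem linearIndependent_slice {N : ℕ} {ψ : (Fin N → Fin 2) → ℂ} (hunit : IsUnitState ψ)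
    (hent : IsEntangledState ψ) {k : Fin N}
    (hsep : IsSeparableDensity (∑ j, proj (slice ψ k j))) :
    LinearIndependent ℂ (slice ψ k) := by
  by_contra hdep
  obtain ⟨χ, p, hχ⟩ := exists_eq_smul_prodState_of_not_linearIndependent hsep hdep
  have hψ : ψ = prodState (extendAt k χ p) :=
    eq_of_forall_slice_eq k fun j => by rw [hχ, slice_prodState_extendAt]
  exact hent (hψ ▸ isProductState_of_isUnitState (hψ ▸ hunit))

theorem exists_ghz_form_of_forall_isSeparableDensity {N : ℕ} (hN : 3 ≤ N)
    {ψ : (Fin N → Fin 2) → ℂ} (hunit : IsUnitState ψ) (hent : IsEntangledState ψ)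
    (hsep : ∀ k : Fin N, IsSeparableDensity (reducedState ψ ({k} : Finset (Fin N)))) :
    ∃ (a b : ℝ) (e f : Fin N → Fin 2 → ℂ), 0 < a ∧ 0 < b ∧ a ^ 2 + b ^ 2 = 1 ∧
      (∀ i, IsUnitQubit (e i)) ∧ (∀ i, IsUnitQubit (f i)) ∧
      (∀ i, ∑ j, conj (e i j) * f i j = 0) ∧
      ψ = fun x => (a : ℂ) * prodState e x + (b : ℂ) * prodState f x := by
  simp only [reducedState_singleton] at hsep
  have hslices (k : Fin N) := linearIndependent_slice hunit hent (hsep k)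
  let k₀ : Fin N := ⟨0, by omega⟩
  obtain ⟨a, b, p, q, hab⟩ :=
    exists_eq_smul_prodState_add_smul_prodState (hsep k₀) (hslices k₀)
  set E := extendAt k₀ a p
  set F := extendAt k₀ b q
  have hψ : ψ = prodState E + prodState F := eq_of_forall_slice_eq k₀ fun j => by
    rw [hab]
    exact congrArg₂ (· + ·) (slice_prodState_extendAt k₀ a p j).symm
      (slice_prodState_extendAt k₀ b q j).symm
  have hslicesEF (i : Fin N) (j : Fin 2) : slice ψ i j =
      E i j • prodState (fun l : OtherQubits i => E l)
        + F i j • prodState (fun l : OtherQubits i => F l) := by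
    rw [hψ, ← slice_prodState, ← slice_prodState]
    rfl
  have hEF (i : Fin N) : LinearIndependent ℂ ![E i, F i] :=
    linearIndependent_of_eq_smul_add_smul (hslicesEF i) (hslices i)
  have horth (i : Fin N) : ∑ j, E i j * conj (F i j) = 0 := by
    have := nontrivial_otherQubits hN i
    refine sum_mul_conj_eq_zero_of_isSeparableDensity (fun l : OtherQubits i => hEF l) ?_
    simpa only [← hslicesEF] using hsep i
  have : Nonempty (Fin N) := ⟨k₀⟩
  rw [hψ] at hunit ⊢
  exact exists_ghz_form_of_eq_prodState_add_prodState (fun i => by simpa using (hEF i).ne_zero 0)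
    (fun i => by simpa using (hEF i).ne_zero 1) horth hunit

theorem forall_isSeparableDensity_of_ghz_form {N : ℕ} {ψ : (Fin N → Fin 2) → ℂ} {a b c : ℂ}
    {e f : Fin N → Fin 2 → ℂ} (hab : Complex.normSq a + Complex.normSq b = 1)
    (he : ∀ i, IsUnitQubit (e i)) (hf : ∀ i, IsUnitQubit (f i))
    (horth : ∀ i, ∑ j, conj (e i j) * f i j = 0) (hc : ‖c‖ = 1)
    (hψ : ψ = fun x => c * (a * prodState e x + b * prodState f x)) (k : Fin N) :
    IsSeparableDensity (reducedState ψ ({k} : Finset (Fin N))) := by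
  have hslices (j : Fin 2) : slice ψ k j =
      (c * a * e k j) • prodState (fun l : OtherQubits k => e l)
        + (c * b * f k j) • prodState (fun l : OtherQubits k => f l) := by
    funext x
    have he' := congrFun (slice_prodState e k j) x
    have hf' := congrFun (slice_prodState f k j) x
    simp only [slice, Pi.smul_apply, smul_eq_mul] at he' hf'
    simp only [slice, hψ, Pi.add_apply, Pi.smul_apply, smul_eq_mul, he', hf']
    ring
  rw [reducedState_singleton, funext hslices]
  refine isSeparableDensity_of_sum_mul_conj_eq_zero (fun l : OtherQubits k => he l)
    (fun l : OtherQubits k => hf l) ?_ ?_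
  · have hc' : Complex.normSq c = 1 := by rw [Complex.normSq_eq_norm_sq, hc, one_pow]
    simp only [Complex.normSq_mul, ← Finset.mul_sum, hc', one_mul]
    rw [show ∑ j, Complex.normSq (e k j) = 1 from he k,
      show ∑ j, Complex.normSq (f k j) = 1 from hf k, mul_one, mul_one, hab]
  · have hef : ∑ j, e k j * conj (f k j) = 0 := by simpa [mul_comm] using congrArg conj (horth k)
    calc ∑ j, c * a * e k j * conj (c * b * f k j)
        = c * conj c * (a * conj b) * ∑ j, e k j * conj (f k j) := by
          rw [Finset.mul_sum]
          refine Finset.sum_congr rfl fun j _ => ?_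
          simp only [map_mul]
          ring
      _ = 0 := by rw [hef, mul_zero]

/-- **Corollary 1 of the paper.** For `N ≥ 3`, an entangled `N`-qubit pure state
`ψ` is fragile with respect to the loss of any single qubit if and only if, up to a global
phase, `ψ = a |e₁,…,e_N⟩ + b |e₁^⊥,…,e_N^⊥⟩` for nonzero complex numbers `a, b` with
`|a|² + |b|² = 1` and pairs of orthonormal single-qubit vectors `(e i, f i)`; moreover `a` and
`b` can always be chosen real and positive. -/
theorem fragile_all_iff_polygonal_form {N : ℕ} (hN : 3 ≤ N)
    (ψ : (Fin N → Fin 2) → ℂ) (hunit : IsUnitState ψ) (hent : IsEntangledState ψ) :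
    ((∀ k : Fin N, IsSeparableDensity (reducedState ψ ({k} : Finset (Fin N)))) ↔
      ∃ (a b : ℂ) (e f : Fin N → Fin 2 → ℂ) (c : ℂ),
        a ≠ 0 ∧ b ≠ 0 ∧ Complex.normSq a + Complex.normSq b = 1 ∧
        (∀ i, IsUnitQubit (e i)) ∧ (∀ i, IsUnitQubit (f i)) ∧
        (∀ i, ∑ j, conj (e i j) * f i j = 0) ∧
        ‖c‖ = 1 ∧
        ψ = fun x => c * (a * prodState e x + b * prodState f x))
    ∧
    ((∀ k : Fin N, IsSeparableDensity (reducedState ψ ({k} : Finset (Fin N)))) →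
      ∃ (a b : ℝ) (e f : Fin N → Fin 2 → ℂ) (c : ℂ),
        0 < a ∧ 0 < b ∧ a ^ 2 + b ^ 2 = 1 ∧
        (∀ i, IsUnitQubit (e i)) ∧ (∀ i, IsUnitQubit (f i)) ∧
        (∀ i, ∑ j, conj (e i j) * f i j = 0) ∧
        ‖c‖ = 1 ∧
        ψ = fun x => c * ((a : ℂ) * prodState e x + (b : ℂ) * prodState f x)) := by
  refine ⟨⟨fun hsep => ?_, ?_⟩, fun hsep => ?_⟩
  · obtain ⟨a, b, e, f, ha, hb, hab, he, hf, horth, hψ⟩ :=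
      exists_ghz_form_of_forall_isSeparableDensity hN hunit hent hsep
    exact ⟨a, b, e, f, 1, by exact_mod_cast ha.ne', by exact_mod_cast hb.ne',
      by simpa [Complex.normSq_ofReal, ← sq] using hab, he, hf, horth, norm_one, by simp [hψ]⟩
  · rintro ⟨a, b, e, f, c, -, -, hab, he, hf, horth, hc, hψ⟩
    exact forall_isSeparableDensity_of_ghz_form hab he hf horth hc hψ
  · obtain ⟨a, b, e, f, ha, hb, hab, he, hf, horth, hψ⟩ :=
      exists_ghz_form_of_forall_isSeparableDensity hN hunit hent hsep
    exact ⟨a, b, e, f, 1, ha, hb, hab, he, hf, horth, norm_one, by simp [hψ]⟩
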